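/- arXiv:2404.00336 — 3 statements merged into one kernel-verified Lean document; each statement's English description precedes it below -/
import Mathlib

section
/- Let K(k) = ∫₀¹ dt/√((1-t²)(1-k²t²)) for k ∈ (0,1) and K'(k) = K(√(1-k²)). Let a = (1 + √3)/√2 and t = 2a⁴/(1 + a⁴). Then t > 1 and |4·K(1/√t)/K'(1/√t) - 4.1335929781133| ≤ 2.81×10⁻¹⁴. -/
open intervalIntegral

/-- The complete elliptic integral of the first kind,
`K(k) = ∫₀¹ dt/√((1-t²)(1-k²t²))`. -/
noncomputable def ellK (k : ℝ) : ℝ :=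
  ∫ t in (0:ℝ)..1, 1 / Real.sqrt ((1 - t ^ 2) * (1 - k ^ 2 * t ^ 2))

/-- The complementary complete elliptic integral, `K'(k) = K(√(1-k²))`. -/
noncomputable def ellK' (k : ℝ) : ℝ := ellK (Real.sqrt (1 - k ^ 2))

/-!
Substituting `t = sin θ` gives `K(k) = ∫₀^{π/2} (1 - k² sin² θ)^{-1/2} dθ`. Expanding the
integrand by the binomial series `(1 - x)^{-1/2} = ∑ cₙ xⁿ`, `cₙ = invSqrtCoeff n = C(2n, n)/4ⁿ`,
and integrating termwise with Wallis' integrals `∫₀^{π/2} sin^{2n} = (π/2) cₙ` gives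
`K(k) = (π/2) ∑ cₙ² k^{2n}`. Since `cₙ` decreases, the tail after `N` terms is at most
`c_N² q^N / (1 - q)` with `q = k²`. Here `t = 1 + √3/2`, so `k² = 4 - 2√3` and `k'² = 2√3 - 3`;
fifty terms of both series, evaluated at rational enclosures of these moduli, pin the ratio down.
-/

open Real Set intervalIntegral MeasureTheory

noncomputable def invSqrtCoeff (n : ℕ) : ℝ :=
  ∏ i ∈ Finset.range n, (2 * (i : ℝ) + 1) / (2 * i + 2)

lemma invSqrtCoeff_succ (n : ℕ) :
    invSqrtCoeff (n + 1) = invSqrtCoeff n * ((2 * n + 1) / (2 * n + 2)) :=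
  Finset.prod_range_succ _ n

lemma invSqrtCoeff_nonneg (n : ℕ) : 0 ≤ invSqrtCoeff n :=
  Finset.prod_nonneg fun _ _ => by positivity

lemma invSqrtCoeff_antitone : Antitone invSqrtCoeff := by
  refine antitone_nat_of_succ_le fun n => ?_
  rw [invSqrtCoeff_succ]
  exact mul_le_of_le_one_right (invSqrtCoeff_nonneg n)
    ((div_le_one (by positivity)).2 (by linarith))

lemma invSqrtCoeff_le_one (n : ℕ) : invSqrtCoeff n ≤ 1 := by
  simpa [invSqrtCoeff] using invSqrtCoeff_antitone (Nat.zero_le n)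

lemma ring_choose_eq_invSqrtCoeff (n : ℕ) :
    Ring.choose ((1 / 2 : ℝ) + n - 1) n = invSqrtCoeff n := by
  have h := Ring.factorial_nsmul_multichoose_eq_ascPochhammer (1 / 2 : ℝ) n
  rw [Ring.multichoose_eq, Polynomial.ascPochhammer_smeval_eq_eval, nsmul_eq_mul] at h
  rw [eq_div_of_mul_eq (by positivity) ((mul_comm _ _).trans h)]
  clear h
  induction n with
  | zero => simp [invSqrtCoeff]
  | succ n ih =>
    rw [ascPochhammer_succ_eval, invSqrtCoeff_succ, ← ih, Nat.factorial_succ]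
    push_cast
    field_simp
    ring

theorem hasSum_invSqrtCoeff_mul_pow {x : ℝ} (hx : |x| < 1) :
    HasSum (fun n => invSqrtCoeff n * x ^ n) (1 / √(1 - x)) := by
  have h := (one_div_one_sub_rpow_hasFPowerSeriesOnBall_zero (1 / 2)).hasSum
    (y := x) (by simpa [enorm_eq_nnnorm, ← NNReal.coe_lt_one] using hx)
  simp only [FormalMultilinearSeries.ofScalars_apply_eq, ring_choose_eq_invSqrtCoeff, smul_eq_mul,
    zero_add] at h
  rw [sqrt_eq_rpow]
  simpa only [mul_comm] using h

theorem hasSum_mul_pow_mem_Icc {a : ℕ → ℝ} {q s : ℝ} (ha0 : ∀ n, 0 ≤ a n) (ha : Antitone a)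
    (hq0 : 0 ≤ q) (hq1 : q < 1) (hs : HasSum (fun n => a n * q ^ n) s) (N : ℕ) :
    s ∈ Icc (∑ n ∈ Finset.range N, a n * q ^ n)
      (∑ n ∈ Finset.range N, a n * q ^ n + a N * q ^ N / (1 - q)) := by
  refine ⟨sum_le_hasSum _ (fun n _ => mul_nonneg (ha0 n) (pow_nonneg hq0 n)) hs, ?_⟩
  have hterm : ∀ n, a (n + N) * q ^ (n + N) ≤ a N * q ^ N * q ^ n := fun n => by
    rw [pow_add, mul_comm (q ^ n), ← mul_assoc]
    exact mul_le_mul_of_nonneg_right (mul_le_mul_of_nonneg_right (ha (Nat.le_add_left N n))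
      (pow_nonneg hq0 N)) (pow_nonneg hq0 n)
  have htail := hasSum_le hterm ((hasSum_nat_add_iff' N).2 hs)
    ((hasSum_geometric_of_lt_one hq0 hq1).mul_left (a N * q ^ N))
  rw [← div_eq_mul_inv] at htail
  linarith

theorem integral_sin_pow_half (n : ℕ) :
    ∫ θ in 0..π / 2, sin θ ^ n = (∫ θ in 0..π, sin θ ^ n) / 2 := by
  have hsymm : ∫ θ in π / 2..π, sin θ ^ n = ∫ θ in 0..π / 2, sin θ ^ n := by
    simpa [sin_pi_sub, sub_half] using
      (integral_comp_sub_left (fun θ => sin θ ^ n) π (a := 0) (b := π / 2)).symm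
  have hint : ∀ a b : ℝ, IntervalIntegrable (fun θ => sin θ ^ n) volume a b :=
    fun a b => (continuous_sin.pow n).intervalIntegrable a b
  rw [← integral_add_adjacent_intervals (hint 0 (π / 2)) (hint (π / 2) π), hsymm]
  ring

theorem integral_sin_pow_even_half (n : ℕ) :
    ∫ θ in 0..π / 2, sin θ ^ (2 * n) = π / 2 * invSqrtCoeff n := by
  rw [integral_sin_pow_half, integral_sin_pow_even, invSqrtCoeff]
  ring

lemma Ioo_zero_pi_div_two_subset : Ioo 0 (π / 2) ⊆ Icc (-(π / 2)) (π / 2) :=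
  Ioo_subset_Icc_self.trans (Icc_subset_Icc (by linarith [pi_pos]) le_rfl)

theorem sin_image_Ioo_zero_pi_div_two : sin '' Ioo 0 (π / 2) = Ioo 0 1 := by
  refine Subset.antisymm ?_ fun t ht => ⟨arcsin t, ⟨arcsin_pos.2 ht.1, arcsin_lt_pi_div_two.2 ht.2⟩,
    sin_arcsin (by linarith [ht.1]) ht.2.le⟩
  rintro _ ⟨θ, hθ, rfl⟩
  refine ⟨sin_pos_of_pos_of_lt_pi hθ.1 (by linarith [hθ.2, pi_pos]), ?_⟩
  simpa using strictMonoOn_sin (Ioo_zero_pi_div_two_subset hθ) ⟨by linarith [pi_pos], le_rfl⟩ hθ.2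

/-- No integrability hypothesis is needed: the change of variables formula for injective maps
holds for arbitrary integrands. -/
theorem integral_div_sqrt_one_sub_sq (g : ℝ → ℝ) :
    ∫ t in 0..1, g t / √(1 - t ^ 2) = ∫ θ in 0..π / 2, g (sin θ) := by
  have hcos : ∀ θ ∈ Ioo 0 (π / 2), 0 < cos θ := fun θ hθ =>
    cos_pos_of_mem_Ioo ⟨by linarith [hθ.1, pi_pos], hθ.2⟩
  rw [integral_of_le zero_le_one, integral_of_le (by positivity), integral_Ioc_eq_integral_Ioo,
    integral_Ioc_eq_integral_Ioo, ← sin_image_Ioo_zero_pi_div_two,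
    integral_image_eq_integral_abs_deriv_smul measurableSet_Ioo
      (fun θ _ => (hasDerivAt_sin θ).hasDerivWithinAt)
      (strictMonoOn_sin.injOn.mono Ioo_zero_pi_div_two_subset)]
  refine setIntegral_congr_fun measurableSet_Ioo fun θ hθ => ?_
  rw [← cos_sq', sqrt_sq (hcos θ hθ).le, abs_of_pos (hcos θ hθ), smul_eq_mul,
    mul_div_cancel₀ _ (hcos θ hθ).ne']

theorem ellK_eq_integral_sin {k : ℝ} (hk : k ^ 2 ≤ 1) :
    ellK k = ∫ θ in 0..π / 2, 1 / √(1 - k ^ 2 * sin θ ^ 2) := by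
  rw [← integral_div_sqrt_one_sub_sq (fun t => 1 / √(1 - k ^ 2 * t ^ 2)), ellK]
  refine integral_congr fun t ht => ?_
  rw [uIcc_of_le zero_le_one] at ht
  have : 0 ≤ 1 - k ^ 2 * t ^ 2 := by nlinarith [ht.1, ht.2]
  rw [sqrt_mul' _ this, div_div, mul_comm]

theorem hasSum_ellK {k : ℝ} (hk : k ^ 2 < 1) :
    HasSum (fun n => π / 2 * invSqrtCoeff n ^ 2 * (k ^ 2) ^ n) (ellK k) := by
  have hk0 : 0 ≤ k ^ 2 := sq_nonneg k
  have hterm : ∀ θ : ℝ, |k ^ 2 * sin θ ^ 2| ≤ k ^ 2 := fun θ => by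
    rw [abs_of_nonneg (by positivity)]
    exact mul_le_of_le_one_right hk0 (sin_sq_le_one θ)
  have hcoef : ∀ n : ℕ, ∫ θ in 0..π / 2, invSqrtCoeff n * (k ^ 2 * sin θ ^ 2) ^ n
      = π / 2 * invSqrtCoeff n ^ 2 * (k ^ 2) ^ n := fun n => by
    simp_rw [mul_pow, ← pow_mul, ← mul_assoc]
    rw [intervalIntegral.integral_const_mul, integral_sin_pow_even_half]
    ring
  rw [ellK_eq_integral_sin hk.le]
  have := hasSum_integral_of_dominated_convergence (μ := volume) (a := 0) (b := π / 2)
    (F := fun n θ => invSqrtCoeff n * (k ^ 2 * sin θ ^ 2) ^ n) (fun n _ => (k ^ 2) ^ n)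
    (fun n => by fun_prop)
    (fun n => Filter.Eventually.of_forall fun θ _ => by
      rw [norm_mul, norm_pow, norm_eq_abs, norm_eq_abs, abs_of_nonneg (invSqrtCoeff_nonneg n)]
      exact (mul_le_of_le_one_left (by positivity) (invSqrtCoeff_le_one n)).trans
        (pow_le_pow_left₀ (abs_nonneg _) (hterm θ) n))
    (Filter.Eventually.of_forall fun _ _ => summable_geometric_of_lt_one hk0 hk)
    intervalIntegrable_const
    (Filter.Eventually.of_forall fun θ _ => hasSum_invSqrtCoeff_mul_pow ((hterm θ).trans_lt hk))
  simpa only [hcoef] using this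

theorem ellK_mem_Icc {k lo hi : ℝ} (N : ℕ) (hlo : 0 ≤ lo) (hhi : hi < 1) (hk : k ^ 2 ∈ Icc lo hi) :
    ellK k ∈ Icc (π / 2 * ∑ n ∈ Finset.range N, invSqrtCoeff n ^ 2 * lo ^ n)
      (π / 2 * (∑ n ∈ Finset.range N, invSqrtCoeff n ^ 2 * hi ^ n
        + invSqrtCoeff N ^ 2 * hi ^ N / (1 - hi))) := by
  have hk0 : 0 ≤ k ^ 2 := hlo.trans hk.1
  have hk1 : k ^ 2 < 1 := hk.2.trans_lt hhi
  have hmono : ∀ {x y : ℝ}, 0 ≤ x → x ≤ y →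
      ∑ n ∈ Finset.range N, invSqrtCoeff n ^ 2 * x ^ n
        ≤ ∑ n ∈ Finset.range N, invSqrtCoeff n ^ 2 * y ^ n := fun hx hxy =>
    Finset.sum_le_sum fun n _ => mul_le_mul_of_nonneg_left (pow_le_pow_left₀ hx hxy n) (sq_nonneg _)
  have htail : invSqrtCoeff N ^ 2 * (k ^ 2) ^ N / (1 - k ^ 2)
      ≤ invSqrtCoeff N ^ 2 * hi ^ N / (1 - hi) :=
    div_le_div₀ (mul_nonneg (sq_nonneg _) (pow_nonneg (hk0.trans hk.2) N))
      (mul_le_mul_of_nonneg_left (pow_le_pow_left₀ hk0 hk.2 N) (sq_nonneg _)) (by linarith)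
      (by linarith [hk.2])
  have hs := hasSum_mul_pow_mem_Icc
    (fun n => mul_nonneg (by positivity) (sq_nonneg (invSqrtCoeff n)))
    (fun m n hmn => mul_le_mul_of_nonneg_left (pow_le_pow_left₀ (invSqrtCoeff_nonneg n)
      (invSqrtCoeff_antitone hmn) 2) (by positivity))
    hk0 hk1 (hasSum_ellK hk1) N
  simp only [mul_assoc, ← Finset.mul_sum, mul_div_assoc, ← mul_add] at hs
  simp only [← mul_div_assoc] at hs
  refine ⟨le_trans ?_ hs.1, hs.2.trans ?_⟩
  · exact mul_le_mul_of_nonneg_left (hmono hlo hk.1) (by positivity)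
  · exact mul_le_mul_of_nonneg_left (add_le_add (hmono hk0 hk.2) htail) (by positivity)

theorem div_mem_Icc_of_mem_Icc {x y a b c d r : ℝ} (hr : 0 < r) (ha : 0 ≤ a) (hc : 0 < c)
    (hx : x ∈ Icc (r * a) (r * b)) (hy : y ∈ Icc (r * c) (r * d)) :
    x / y ∈ Icc (a / d) (b / c) := by
  have hy0 : 0 < y := (mul_pos hr hc).trans_le hy.1
  constructor
  · rw [← mul_div_mul_left a d hr.ne']
    exact div_le_div₀ ((mul_nonneg hr.le ha).trans hx.1) hx.1 hy0 hy.2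
  · rw [← mul_div_mul_left b c hr.ne']
    exact div_le_div₀ ((mul_nonneg hr.le ha).trans (hx.1.trans hx.2)) hx.2 (mul_pos hr hc) hy.1

lemma sum_range_succ_invSqrtCoeff_sq_mul_pow_pos {q : ℝ} (hq : 0 ≤ q) (N : ℕ) :
    0 < ∑ n ∈ Finset.range (N + 1), invSqrtCoeff n ^ 2 * q ^ n := by
  rw [Finset.sum_range_succ']
  simp only [invSqrtCoeff, Finset.range_zero, Finset.prod_empty, one_pow, pow_zero, mul_one]
  exact add_pos_of_nonneg_of_pos (Finset.sum_nonneg fun n _ => by positivity) one_pos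

lemma diagonal_parameter_eq : 2 * ((1 + √3) / √2) ^ 4 / (1 + ((1 + √3) / √2) ^ 4) = 1 + √3 / 2 := by
  have h3 : √3 ^ 2 = 3 := sq_sqrt (by norm_num)
  have h2 : √2 ^ 4 = 4 := by
    rw [show √2 ^ 4 = (√2 ^ 2) ^ 2 by ring, sq_sqrt (by norm_num)]
    norm_num
  have ha4 : ((1 + √3) / √2) ^ 4 = 7 + 4 * √3 := by
    rw [div_pow, h2]
    linear_combination (√3 ^ 2 + 4 * √3 + 9) / 4 * h3
  rw [ha4]
  field_simp
  linear_combination -4 * h3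

lemma inv_one_add_sqrt_three_div_two : (1 + √3 / 2)⁻¹ = 4 - 2 * √3 := by
  have h3 : √3 ^ 2 = 3 := sq_sqrt (by norm_num)
  field_simp
  linear_combination 2 * h3

lemma sqrt_three_mem_Icc : √3 ∈ Icc 1.7320508075688772935 1.7320508075688772936 := by
  constructor
  · exact (le_sqrt (by norm_num) (by norm_num)).2 (by norm_num)
  · exact (sqrt_le_left (by norm_num)).2 (by norm_num)

/-- The extremal length of a diagonal curve on the cube punctured at its vertices:
with `a = (1+√3)/√2` and `t = 2a⁴/(1+a⁴)`, one has `t > 1` and `4 (K/K')(1/√t)`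
lies within `2.81 × 10⁻¹⁴` of `4.1335929781133`. -/
theorem diagonal_curve_extremal_length :
    let a : ℝ := (1 + Real.sqrt 3) / Real.sqrt 2
    let t : ℝ := 2 * a ^ 4 / (1 + a ^ 4)
    t > 1 ∧
    |4 * ellK (1 / Real.sqrt t) / ellK' (1 / Real.sqrt t) - 4.1335929781133| ≤ 2.81e-14 := by
  intro a t
  have ht : t = 1 + √3 / 2 := diagonal_parameter_eq
  obtain ⟨hs3lo, hs3hi⟩ := sqrt_three_mem_Icc
  have hk : (1 / √t) ^ 2 = 4 - 2 * √3 := by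
    rw [div_pow, one_pow, sq_sqrt (by rw [ht]; positivity), ht, one_div,
      inv_one_add_sqrt_three_div_two]
  have hk' : √(1 - (1 / √t) ^ 2) ^ 2 = 2 * √3 - 3 := by
    rw [sq_sqrt (by rw [hk]; linarith), hk]
    ring
  refine ⟨by rw [ht]; linarith, ?_⟩
  have hK := ellK_mem_Icc 50 (lo := 0.5358983848622454128) (hi := 0.535898384862245413)
    (by norm_num) (by norm_num) (k := 1 / √t) (by rw [hk]; constructor <;> linarith)
  have hK' := ellK_mem_Icc 50 (lo := 0.464101615137754587) (hi := 0.4641016151377545872)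
    (by norm_num) (by norm_num) (k := √(1 - (1 / √t) ^ 2)) (by rw [hk']; constructor <;> linarith)
  have hratio := div_mem_Icc_of_mem_Icc pi_div_two_pos
    (Finset.sum_nonneg fun n _ => by positivity)
    (sum_range_succ_invSqrtCoeff_sq_mul_pow_pos (by norm_num) 49) hK hK'
  rw [ellK', mul_div_assoc]
  generalize ellK (1 / √t) / ellK √(1 - (1 / √t) ^ 2) = r at hratio ⊢
  obtain ⟨hlo, hhi⟩ := hratio
  norm_num [Finset.sum_range_succ, invSqrtCoeff, Finset.prod_range_succ] at hlo hhi
  rw [abs_sub_le_iff]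
  constructor <;> linarith
end

section
/- Let K(k) = ∫₀¹ dt/√((1-t²)(1-k²t²)) for k ∈ (0,1) and K'(k) = K(√(1-k²)). Let a = (1 + √3)/√2 and t = 1 + 1/a⁴. Then |4·K(1/√t)/K'(1/√t) - 6.9282032302755| ≤ 2.74×10⁻¹⁴. -/
/-!
With `k² = 1/t = (2 + √3)/4` one has `k'² = (2 - √3)/4`, and the quantity is `4√3` because
`K(k) = √3 K(k')`. The substitution `t = 2s/(1 + s²)` gives
`K(k) = 2 ∫₀¹ ds/√(s⁴ + 2(1 - 2k²)s² + 1)`, and `x = d + √3 s²` identifies this quartic integral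
for `1 - 2k² = d√3/2` with `∫_d^∞ dx/√(x³ - d)`, `d = ±1`, up to a factor independent of `d`.
The two cubic integrals are related by the 3-isogeny `z = (x³ + 4)/(3x²)` from `y² = x³ + 1` to
`y² = z³ - 1`: it maps each of `(-1, 0)`, `(0, 2)`, `(2, ∞)` bijectively onto `(1, ∞)` and pulls
`dz/√(z³ - 1)` back to `√3 dx/√(x³ + 1)`, so `∫_{-1}^∞ dx/√(x³ + 1) = √3 ∫_1^∞ dz/√(z³ - 1)`.
-/

open intervalIntegral

open MeasureTheory Set Filter Topology

section OneDivSqrtSubstitution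

variable {S : Set ℝ} {φ φ' P Q : ℝ → ℝ} {κ : ℝ}

-- No sign condition on `v`: if `v ≤ 0`, both sides vanish since `√v = 0`.
theorem abs_mul_one_div_sqrt_eq {u v w : ℝ} (hu : u ≠ 0) (hκ : 0 < κ)
    (h : w = (u / κ) ^ 2 * v) : |u| * (1 / √w) = κ * (1 / √v) := by
  rw [h, Real.sqrt_mul (sq_nonneg _), Real.sqrt_sq_eq_abs, abs_div, abs_of_pos hκ]
  have : |u| ≠ 0 := abs_ne_zero.mpr hu
  field_simp

theorem integral_one_div_sqrt_image (hS : MeasurableSet S)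
    (hφ : ∀ x ∈ S, HasDerivWithinAt φ (φ' x) S x) (hinj : InjOn φ S) (hφ' : ∀ x ∈ S, φ' x ≠ 0)
    (hκ : 0 < κ) (hPQ : ∀ x ∈ S, P (φ x) = (φ' x / κ) ^ 2 * Q x) :
    ∫ y in φ '' S, 1 / √(P y) = κ * ∫ x in S, 1 / √(Q x) := by
  rw [integral_image_eq_integral_abs_deriv_smul hS hφ hinj, ← MeasureTheory.integral_const_mul]
  exact setIntegral_congr_fun hS fun x hx => abs_mul_one_div_sqrt_eq (hφ' x hx) hκ (hPQ x hx)

theorem integrableOn_one_div_sqrt_image_iff (hS : MeasurableSet S)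
    (hφ : ∀ x ∈ S, HasDerivWithinAt φ (φ' x) S x) (hinj : InjOn φ S) (hφ' : ∀ x ∈ S, φ' x ≠ 0)
    (hκ : 0 < κ) (hPQ : ∀ x ∈ S, P (φ x) = (φ' x / κ) ^ 2 * Q x) :
    IntegrableOn (fun y => 1 / √(P y)) (φ '' S) ↔ IntegrableOn (fun x => 1 / √(Q x)) S := by
  simp only [integrableOn_image_iff_integrableOn_abs_deriv_smul hS hφ hinj, smul_eq_mul]
  rw [integrableOn_congr_fun (fun x hx => abs_mul_one_div_sqrt_eq (hφ' x hx) hκ (hPQ x hx)) hS]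
  exact integrable_const_mul_iff (isUnit_iff_ne_zero.mpr hκ.ne') _

end OneDivSqrtSubstitution

section Quartic

variable {c : ℝ}

theorem quartic_pos (hc : -1 < c) (s : ℝ) : 0 < s ^ 4 + 2 * c * s ^ 2 + 1 := by
  nlinarith [sq_nonneg (s ^ 2 - 1), sq_nonneg (s ^ 2 + c), sq_nonneg s,
    mul_nonneg (sq_nonneg s) (by linarith : 0 ≤ 1 + c)]

theorem continuous_one_div_sqrt_quartic (hc : -1 < c) :
    Continuous fun s : ℝ => 1 / √(s ^ 4 + 2 * c * s ^ 2 + 1) :=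
  continuous_const.div (by fun_prop) fun s => (Real.sqrt_pos.mpr (quartic_pos hc s)).ne'

theorem integral_quartic_pos (hc : -1 < c) :
    0 < ∫ s in Ioo 0 1, 1 / √(s ^ 4 + 2 * c * s ^ 2 + 1) := by
  rw [← integral_Ioc_eq_integral_Ioo, ← intervalIntegral.integral_of_le zero_le_one]
  exact intervalIntegral_pos_of_pos_on ((continuous_one_div_sqrt_quartic hc).intervalIntegrable _ _)
    (fun s _ => one_div_pos.mpr (Real.sqrt_pos.mpr (quartic_pos hc s))) one_pos

theorem inv_image_Ioo_zero_one : (·⁻¹) '' Ioo (0 : ℝ) 1 = Ioi 1 := by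
  rw [image_inv_eq_inv, inv_Ioo_0_left one_pos, inv_one]

theorem quartic_inv {s : ℝ} (hs : s ≠ 0) :
    s⁻¹ ^ 4 + 2 * c * s⁻¹ ^ 2 + 1 = (-(s ^ 2)⁻¹ / 1) ^ 2 * (s ^ 4 + 2 * c * s ^ 2 + 1) := by
  field_simp
  ring

theorem integrableOn_quartic_Ioi_zero (hc : -1 < c) :
    IntegrableOn (fun s => 1 / √(s ^ 4 + 2 * c * s ^ 2 + 1)) (Ioi 0) := by
  have hIcc : IntegrableOn (fun s => 1 / √(s ^ 4 + 2 * c * s ^ 2 + 1)) (Icc 0 1) :=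
    (continuous_one_div_sqrt_quartic hc).integrableOn_Icc
  rw [← Ioc_union_Ioi_eq_Ioi zero_le_one, ← inv_image_Ioo_zero_one]
  refine (hIcc.mono_set Ioc_subset_Icc_self).union ?_
  exact (integrableOn_one_div_sqrt_image_iff measurableSet_Ioo
    (fun s hs => (hasDerivAt_inv hs.1.ne').hasDerivWithinAt) inv_injective.injOn
    (fun s hs => by simpa using hs.1.ne') one_pos (fun s hs => quartic_inv hs.1.ne')).mpr
    (hIcc.mono_set Ioo_subset_Icc_self)

theorem integral_quartic_Ioi_zero (hc : -1 < c) :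
    ∫ s in Ioi 0, 1 / √(s ^ 4 + 2 * c * s ^ 2 + 1)
      = 2 * ∫ s in Ioo 0 1, 1 / √(s ^ 4 + 2 * c * s ^ 2 + 1) := by
  have hint := integrableOn_quartic_Ioi_zero hc
  rw [← Ioc_union_Ioi_eq_Ioi zero_le_one] at hint ⊢
  rw [setIntegral_union (Ioc_disjoint_Ioi le_rfl) measurableSet_Ioi
      (hint.mono_set subset_union_left) (hint.mono_set subset_union_right),
    integral_Ioc_eq_integral_Ioo, ← inv_image_Ioo_zero_one,
    integral_one_div_sqrt_image measurableSet_Ioo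
      (fun s hs => (hasDerivAt_inv hs.1.ne').hasDerivWithinAt) inv_injective.injOn
      (fun s hs => by simpa using hs.1.ne') one_pos (fun s hs => quartic_inv hs.1.ne')]
  ring

end Quartic

theorem ellK_eq_two_mul_integral_quartic (k : ℝ) :
    ellK k = 2 * ∫ s in Ioo 0 1, 1 / √(s ^ 4 + 2 * (1 - 2 * k ^ 2) * s ^ 2 + 1) := by
  set φ : ℝ → ℝ := fun s => 2 * s / (1 + s ^ 2)
  set φ' : ℝ → ℝ := fun s => 2 * (1 - s ^ 2) / (1 + s ^ 2) ^ 2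
  have hφ (s : ℝ) : HasDerivAt φ (φ' s) s := by
    have h := ((hasDerivAt_id' s).const_mul 2).div ((hasDerivAt_pow 2 s).const_add 1)
      (by positivity : 1 + s ^ 2 ≠ 0)
    exact h.congr_deriv (by simp only [φ']; norm_num; ring)
  have hφ'_pos {s : ℝ} (hs : s ∈ Ioo 0 1) : 0 < φ' s := by
    have : 0 < 1 - s ^ 2 := by nlinarith [hs.1, hs.2]
    positivity
  have hmono : StrictMonoOn φ (Icc 0 1) :=
    strictMonoOn_of_deriv_pos (convex_Icc 0 1) (fun s _ => (hφ s).continuousAt.continuousWithinAt)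
      fun s hs => by rw [(hφ s).deriv]; exact hφ'_pos (by simpa using hs)
  have himg : φ '' Ioo 0 1 = Ioo 0 1 := by
    rw [ContinuousOn.image_Ioo_of_strictMonoOn zero_le_one
      (fun s _ => (hφ s).continuousAt.continuousWithinAt) hmono]
    norm_num [φ]
  rw [ellK, intervalIntegral.integral_of_le zero_le_one, integral_Ioc_eq_integral_Ioo]
  nth_rw 1 [← himg]
  refine integral_one_div_sqrt_image measurableSet_Ioo (fun s _ => (hφ s).hasDerivWithinAt)
    (hmono.injOn.mono Ioo_subset_Icc_self) (fun s hs => (hφ'_pos hs).ne') two_pos fun s _ => ?_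
  simp only [φ, φ']
  field_simp
  ring

theorem image_Ioi_zero_add_mul_sq (d : ℝ) {r : ℝ} (hr : 0 < r) :
    (fun s => d + r * s ^ 2) '' Ioi 0 = Ioi d := by
  refine Subset.antisymm ?_ fun y (hy : d < y) => ?_
  · rintro _ ⟨s, hs, rfl⟩
    have : 0 < s := hs
    exact lt_add_of_pos_right d (by positivity)
  · have : 0 < (y - d) / r := div_pos (sub_pos.mpr hy) hr
    refine ⟨√((y - d) / r), Real.sqrt_pos.mpr this, ?_⟩
    simp only
    rw [Real.sq_sqrt this.le]
    field_simp
    ring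

theorem strictMonoOn_add_mul_sq (d : ℝ) {r : ℝ} (hr : 0 < r) :
    StrictMonoOn (fun s => d + r * s ^ 2) (Ioi 0) := fun a ha _ _ hab => by
  have : 0 < a := ha
  simp only
  gcongr

theorem hasDerivAt_add_mul_sq (d r s : ℝ) :
    HasDerivAt (fun s => d + r * s ^ 2) (2 * r * s) s :=
  (((hasDerivAt_pow 2 s).const_mul r).const_add d).congr_deriv (by norm_num; ring)

section Cubic

variable {d : ℝ}

theorem cubic_eq_sq_mul_quartic (hd : d ^ 2 = 1) (s : ℝ) :
    (d + √3 * s ^ 2) ^ 3 - d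
      = (2 * √3 * s / (2 / √√3)) ^ 2 * (s ^ 4 + 2 * (d * √3 / 2) * s ^ 2 + 1) := by
  have h3 : √3 ^ 2 = 3 := Real.sq_sqrt (by norm_num)
  have h4 : √√3 ^ 2 = √3 := Real.sq_sqrt (Real.sqrt_nonneg 3)
  field_simp
  linear_combination (d + 3 * √3 * s ^ 2) * hd - (√3 * s ^ 2 + d * √3 ^ 2 * s ^ 4) * h3
    - √3 ^ 2 * s ^ 2 * (s ^ 4 + d * √3 * s ^ 2 + 1) * h4

theorem neg_one_lt_mul_sqrt_three_div_two (hd : d ^ 2 = 1) : -1 < d * √3 / 2 := by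
  have h3 : √3 ^ 2 = 3 := Real.sq_sqrt (by norm_num)
  nlinarith [Real.sqrt_nonneg 3, sq_nonneg (d + 1), sq_nonneg (d * √3 + 2)]

theorem integrableOn_cubic (hd : d ^ 2 = 1) :
    IntegrableOn (fun x => 1 / √(x ^ 3 - d)) (Ioi d) := by
  have h3 : (0 : ℝ) < √3 := by positivity
  rw [← image_Ioi_zero_add_mul_sq d h3]
  exact (integrableOn_one_div_sqrt_image_iff measurableSet_Ioi
    (fun s _ => (hasDerivAt_add_mul_sq d √3 s).hasDerivWithinAt)
    (strictMonoOn_add_mul_sq d h3).injOn (fun s hs => by have : 0 < s := hs; positivity)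
    (by positivity) fun s _ => cubic_eq_sq_mul_quartic hd s).mpr
    (integrableOn_quartic_Ioi_zero (neg_one_lt_mul_sqrt_three_div_two hd))

theorem integral_cubic (hd : d ^ 2 = 1) :
    ∫ x in Ioi d, 1 / √(x ^ 3 - d)
      = 4 / √√3 * ∫ s in Ioo 0 1, 1 / √(s ^ 4 + 2 * (d * √3 / 2) * s ^ 2 + 1) := by
  have h3 : (0 : ℝ) < √3 := by positivity
  rw [← image_Ioi_zero_add_mul_sq d h3, integral_one_div_sqrt_image measurableSet_Ioi
    (fun s _ => (hasDerivAt_add_mul_sq d √3 s).hasDerivWithinAt)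
    (strictMonoOn_add_mul_sq d h3).injOn (fun s hs => by have : 0 < s := hs; positivity)
    (by positivity) fun s _ => cubic_eq_sq_mul_quartic hd s,
    integral_quartic_Ioi_zero (neg_one_lt_mul_sqrt_three_div_two hd)]
  ring

end Cubic

section CubicIsogeny

noncomputable def cubicIsogeny (x : ℝ) : ℝ := (x ^ 3 + 4) / (3 * x ^ 2)

variable {x : ℝ}

theorem hasDerivAt_cubicIsogeny (hx : x ≠ 0) :
    HasDerivAt cubicIsogeny ((x ^ 3 - 8) / (3 * x ^ 3)) x := by
  have h := ((hasDerivAt_pow 3 x).add_const 4).div ((hasDerivAt_pow 2 x).const_mul 3)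
    (by positivity : 3 * x ^ 2 ≠ 0)
  exact h.congr_deriv (by field_simp; norm_num; ring)

theorem deriv_cubicIsogeny_ne_zero (hx : x ≠ 0) (h2 : x ≠ 2) : (x ^ 3 - 8) / (3 * x ^ 3) ≠ 0 := by
  have : (x - 2) * ((x + 1) ^ 2 + 3) ≠ 0 := mul_ne_zero (sub_ne_zero.mpr h2) (by positivity)
  exact div_ne_zero (fun h => this (by linear_combination h)) (by positivity)

theorem cubicIsogeny_pow_three_sub_one (hx : x ≠ 0) :
    cubicIsogeny x ^ 3 - 1 = ((x ^ 3 - 8) / (3 * x ^ 3) / √3) ^ 2 * (x ^ 3 + 1) := by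
  have h3 : √3 ^ 2 = 3 := Real.sq_sqrt (by norm_num)
  rw [cubicIsogeny, div_pow _ √3, h3]
  field_simp
  ring

theorem one_lt_cubicIsogeny (h1 : -1 < x) (h0 : x ≠ 0) (h2 : x ≠ 2) : 1 < cubicIsogeny x := by
  have : 0 < (x + 1) * (x - 2) ^ 2 := mul_pos (by linarith) (by positivity)
  rw [cubicIsogeny, one_lt_div (by positivity)]
  linarith

theorem tendsto_cubicIsogeny_nhdsNE_zero : Tendsto cubicIsogeny (𝓝[≠] 0) atTop := by
  have hsq : Tendsto (fun x : ℝ => x ^ 2) (𝓝[≠] 0) (𝓝[>] 0) :=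
    tendsto_nhdsWithin_of_tendsto_nhds_of_eventually_within _
      (((continuous_pow 2).tendsto' 0 0 (by norm_num)).mono_left nhdsWithin_le_nhds)
      (eventually_nhdsWithin_of_forall fun x (hx : x ≠ 0) => show 0 < x ^ 2 by positivity)
  refine ((((continuous_id.tendsto 0).mono_left nhdsWithin_le_nhds).div_const 3).add_atTop
    ((tendsto_inv_nhdsGT_zero.comp hsq).const_mul_atTop (by norm_num : (0 : ℝ) < 4 / 3))).congr' ?_
  filter_upwards [self_mem_nhdsWithin] with x (hx : x ≠ 0)
  simp only [id, Function.comp, cubicIsogeny]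
  field_simp

theorem tendsto_cubicIsogeny_atTop : Tendsto cubicIsogeny atTop atTop := by
  refine tendsto_atTop_mono' atTop ?_ (tendsto_id.atTop_div_const (by norm_num : (0 : ℝ) < 3))
  filter_upwards [eventually_gt_atTop 0] with x hx
  rw [cubicIsogeny, id, div_le_div_iff₀ (by norm_num) (by positivity)]
  nlinarith [pow_pos hx 2]

theorem cubicIsogeny_image_eq_Ioi_one {S : Set ℝ} (hS : IsPreconnected S)
    (hSd : ∀ x ∈ S, -1 < x ∧ x ≠ 0 ∧ x ≠ 2) {l₁ l₂ : Filter ℝ} [l₁.NeBot] [l₂.NeBot]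
    (hl₁ : l₁ ≤ 𝓟 S) (hl₂ : l₂ ≤ 𝓟 S) (h₁ : Tendsto cubicIsogeny l₁ (𝓝 1))
    (h₂ : Tendsto cubicIsogeny l₂ atTop) : cubicIsogeny '' S = Ioi 1 := by
  refine Subset.antisymm ?_ (hS.intermediate_value_Ioi hl₁ hl₂
    (fun x hx => (hasDerivAt_cubicIsogeny (hSd x hx).2.1).continuousAt.continuousWithinAt) h₁ h₂)
  rintro _ ⟨x, hx, rfl⟩
  exact one_lt_cubicIsogeny (hSd x hx).1 (hSd x hx).2.1 (hSd x hx).2.2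

theorem tendsto_cubicIsogeny_nhds_one {a : ℝ} (ha : a = -1 ∨ a = 2) {l : Filter ℝ}
    (hl : l ≤ 𝓝 a) : Tendsto cubicIsogeny l (𝓝 1) := by
  have h0 : a ≠ 0 := by rcases ha with rfl | rfl <;> norm_num
  have h1 : cubicIsogeny a = 1 := by rcases ha with rfl | rfl <;> norm_num [cubicIsogeny]
  exact h1 ▸ (hasDerivAt_cubicIsogeny h0).continuousAt.mono_left hl

theorem integral_Ioi_one_eq_sqrt_three_mul_of_cubicIsogeny_image {S : Set ℝ} (hS : MeasurableSet S)
    (hSd : ∀ x ∈ S, x ≠ 0 ∧ x ≠ 2) (hinj : InjOn cubicIsogeny S)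
    (himg : cubicIsogeny '' S = Ioi 1) :
    ∫ z in Ioi 1, 1 / √(z ^ 3 - 1) = √3 * ∫ x in S, 1 / √(x ^ 3 + 1) := by
  rw [← himg]
  exact integral_one_div_sqrt_image hS
    (fun x hx => (hasDerivAt_cubicIsogeny (hSd x hx).1).hasDerivWithinAt) hinj
    (fun x hx => deriv_cubicIsogeny_ne_zero (hSd x hx).1 (hSd x hx).2) (by positivity)
    fun x hx => cubicIsogeny_pow_three_sub_one (hSd x hx).1

theorem strictMonoOn_cubicIsogeny_Ioo_neg_one_zero : StrictMonoOn cubicIsogeny (Ioo (-1) 0) := by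
  refine strictMonoOn_of_deriv_pos (convex_Ioo _ _)
    (fun x hx => (hasDerivAt_cubicIsogeny hx.2.ne).continuousAt.continuousWithinAt) fun x hx => ?_
  rw [interior_Ioo] at hx
  have : x ^ 3 < 0 := Odd.pow_neg (by decide) hx.2
  rw [(hasDerivAt_cubicIsogeny hx.2.ne).deriv]
  exact div_pos_of_neg_of_neg (by linarith) (by linarith)

theorem strictAntiOn_cubicIsogeny_Ioo_zero_two : StrictAntiOn cubicIsogeny (Ioo 0 2) := by
  refine strictAntiOn_of_deriv_neg (convex_Ioo _ _)
    (fun x hx => (hasDerivAt_cubicIsogeny hx.1.ne').continuousAt.continuousWithinAt) fun x hx => ?_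
  rw [interior_Ioo] at hx
  have : x ^ 3 < 2 ^ 3 := pow_lt_pow_left₀ hx.2 hx.1.le (by norm_num)
  rw [(hasDerivAt_cubicIsogeny hx.1.ne').deriv]
  exact div_neg_of_neg_of_pos (by linarith) (by have := hx.1; positivity)

theorem strictMonoOn_cubicIsogeny_Ioi_two : StrictMonoOn cubicIsogeny (Ioi 2) := by
  refine strictMonoOn_of_deriv_pos (convex_Ioi _) (fun x (hx : 2 < x) =>
    (hasDerivAt_cubicIsogeny (by positivity)).continuousAt.continuousWithinAt) fun x hx => ?_
  rw [interior_Ioi] at hx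
  have hx : 2 < x := hx
  have : 2 ^ 3 < x ^ 3 := pow_lt_pow_left₀ hx (by norm_num) (by norm_num)
  rw [(hasDerivAt_cubicIsogeny (by positivity)).deriv]
  exact div_pos (by linarith) (by positivity)

theorem cubicIsogeny_image_Ioo_neg_one_zero : cubicIsogeny '' Ioo (-1) 0 = Ioi 1 :=
  cubicIsogeny_image_eq_Ioi_one isPreconnected_Ioo
    (fun x hx => ⟨hx.1, hx.2.ne, (hx.2.trans two_pos).ne⟩)
    (le_principal_iff.mpr (Ioo_mem_nhdsGT (by norm_num)))
    (le_principal_iff.mpr (Ioo_mem_nhdsLT (by norm_num)))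
    (tendsto_cubicIsogeny_nhds_one (Or.inl rfl) nhdsWithin_le_nhds)
    (tendsto_cubicIsogeny_nhdsNE_zero.mono_left (nhdsWithin_mono _ fun _ hx => ne_of_lt hx))

theorem cubicIsogeny_image_Ioo_zero_two : cubicIsogeny '' Ioo 0 2 = Ioi 1 :=
  cubicIsogeny_image_eq_Ioi_one isPreconnected_Ioo
    (fun x hx => ⟨by linarith [hx.1], hx.1.ne', hx.2.ne⟩)
    (le_principal_iff.mpr (Ioo_mem_nhdsLT (by norm_num)))
    (le_principal_iff.mpr (Ioo_mem_nhdsGT (by norm_num)))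
    (tendsto_cubicIsogeny_nhds_one (Or.inr rfl) nhdsWithin_le_nhds)
    (tendsto_cubicIsogeny_nhdsNE_zero.mono_left (nhdsWithin_mono _ fun _ hx => ne_of_gt hx))

theorem cubicIsogeny_image_Ioi_two : cubicIsogeny '' Ioi 2 = Ioi 1 :=
  cubicIsogeny_image_eq_Ioi_one isPreconnected_Ioi
    (fun x (hx : 2 < x) => ⟨by linarith, by positivity, hx.ne'⟩)
    (le_principal_iff.mpr self_mem_nhdsWithin) (le_principal_iff.mpr (Ioi_mem_atTop 2))
    (tendsto_cubicIsogeny_nhds_one (Or.inr rfl) nhdsWithin_le_nhds) tendsto_cubicIsogeny_atTop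

end CubicIsogeny

theorem integral_Ioi_neg_one_eq_sqrt_three_mul :
    ∫ x in Ioi (-1), 1 / √(x ^ 3 + 1) = √3 * ∫ z in Ioi 1, 1 / √(z ^ 3 - 1) := by
  have hint : IntegrableOn (fun x => 1 / √(x ^ 3 + 1)) (Ioi (-1)) := by
    simpa using integrableOn_cubic (d := -1) (by norm_num)
  have hA := integral_Ioi_one_eq_sqrt_three_mul_of_cubicIsogeny_image measurableSet_Ioo
    (fun x hx => ⟨hx.2.ne, (hx.2.trans two_pos).ne⟩)
    strictMonoOn_cubicIsogeny_Ioo_neg_one_zero.injOn cubicIsogeny_image_Ioo_neg_one_zero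
  have hB := integral_Ioi_one_eq_sqrt_three_mul_of_cubicIsogeny_image measurableSet_Ioo
    (fun x hx => ⟨hx.1.ne', hx.2.ne⟩)
    strictAntiOn_cubicIsogeny_Ioo_zero_two.injOn cubicIsogeny_image_Ioo_zero_two
  have hC := integral_Ioi_one_eq_sqrt_three_mul_of_cubicIsogeny_image measurableSet_Ioi
    (fun x (hx : 2 < x) => ⟨by positivity, hx.ne'⟩)
    strictMonoOn_cubicIsogeny_Ioi_two.injOn cubicIsogeny_image_Ioi_two
  have h3 : √3 ^ 2 = 3 := Real.sq_sqrt (by norm_num)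
  rw [← Ioc_union_Ioi_eq_Ioi (by norm_num : (-1 : ℝ) ≤ 2)] at hint ⊢
  rw [setIntegral_union (Ioc_disjoint_Ioi le_rfl) measurableSet_Ioi
    (hint.mono_set subset_union_left) (hint.mono_set subset_union_right)]
  replace hint := hint.mono_set subset_union_left
  rw [← Ioc_union_Ioc_eq_Ioc (by norm_num : (-1 : ℝ) ≤ 0) zero_le_two] at hint ⊢
  rw [setIntegral_union (Ioc_disjoint_Ioc_of_le le_rfl) measurableSet_Ioc
      (hint.mono_set subset_union_left) (hint.mono_set subset_union_right),
    integral_Ioc_eq_integral_Ioo, integral_Ioc_eq_integral_Ioo]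
  refine mul_left_cancel₀ (by positivity : √3 ≠ 0) ?_
  linear_combination -hA - hB - hC - (∫ z in Ioi 1, 1 / √(z ^ 3 - 1)) * h3

theorem integral_quartic_neg_eq_sqrt_three_mul :
    ∫ s in Ioo 0 1, 1 / √(s ^ 4 + 2 * -(√3 / 2) * s ^ 2 + 1)
      = √3 * ∫ s in Ioo 0 1, 1 / √(s ^ 4 + 2 * (√3 / 2) * s ^ 2 + 1) := by
  have hm := integral_cubic (d := -1) (by norm_num)
  have hp := integral_cubic (d := 1) (by norm_num)
  simp only [sub_neg_eq_add, neg_one_mul, one_mul, neg_div] at hm hp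
  rw [integral_Ioi_neg_one_eq_sqrt_three_mul, hp] at hm
  refine mul_left_cancel₀ (by positivity : 4 / √√3 ≠ 0) ?_
  linear_combination -hm

theorem ellK_div_ellK'_eq_sqrt_three {k : ℝ} (hk : k ^ 2 = (2 + √3) / 4) :
    ellK k / ellK' k = √3 := by
  have h3 : √3 ^ 2 = 3 := Real.sq_sqrt (by norm_num)
  have hk' : √(1 - k ^ 2) ^ 2 = 1 - k ^ 2 :=
    Real.sq_sqrt (by nlinarith [Real.sqrt_nonneg 3])
  have hpos := integral_quartic_pos (c := √3 / 2) (by linarith [Real.sqrt_nonneg 3])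
  rw [ellK', ellK_eq_two_mul_integral_quartic, ellK_eq_two_mul_integral_quartic, hk', hk,
    show 1 - 2 * ((2 + √3) / 4) = -(√3 / 2) by ring,
    show 1 - 2 * (1 - (2 + √3) / 4) = √3 / 2 by ring, integral_quartic_neg_eq_sqrt_three_mul,
    mul_left_comm, mul_div_assoc, div_self (mul_pos two_pos hpos).ne', mul_one]

/-- The extremal length of a staple curve on the cube punctured at its vertices:
with `a = (1+√3)/√2` and `t = 1 + 1/a⁴`, the quantity `4 (K/K')(1/√t)`
lies within `2.74 × 10⁻¹⁴` of `6.9282032302755`. -/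
theorem staple_curve_extremal_length :
    let a : ℝ := (1 + Real.sqrt 3) / Real.sqrt 2
    let t : ℝ := 1 + 1 / a ^ 4
    |4 * ellK (1 / Real.sqrt t) / ellK' (1 / Real.sqrt t) - 6.9282032302755| ≤ 2.74e-14 := by
  intro a t
  have h3 : √3 ^ 2 = 3 := Real.sq_sqrt (by norm_num)
  have ha : a ^ 2 = 2 + √3 := by
    rw [div_pow, Real.sq_sqrt zero_le_two]
    linear_combination h3 / 2
  have ht : t = 8 - 4 * √3 := by
    have h : (2 + √3) * (2 - √3) = 1 := by linear_combination -h3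
    rw [show t = 1 + 1 / (a ^ 2) ^ 2 by ring, ha, one_div, ← inv_pow,
      inv_eq_of_mul_eq_one_right h]
    linear_combination h3
  have hk : (1 / √t) ^ 2 = (2 + √3) / 4 := by
    have : 0 < 8 - 4 * √3 := by nlinarith [Real.sqrt_nonneg 3]
    rw [div_pow, one_pow, Real.sq_sqrt (ht ▸ this.le), ht, div_eq_div_iff this.ne' four_ne_zero]
    linear_combination 4 * h3
  have hlo : 1.7320508075688772 < √3 := Real.lt_sqrt (by norm_num) |>.mpr (by norm_num)
  have hhi : √3 < 1.7320508075688773 := (Real.sqrt_lt' (by norm_num)).mpr (by norm_num)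
  rw [mul_div_assoc, ellK_div_ellK'_eq_sqrt_three hk, abs_le]
  constructor <;> linarith
end

section
/- The complex sine function restricted to the open vertical strip S = {z ∈ ℂ : -π/2 < Re(z) < π/2} is a bijection from S onto ℂ \ ((-∞,-1] ∪ [1,∞)), where (-∞,-1] and [1,∞) denote the corresponding rays of the real axis viewed as subsets of ℂ. -/
/-!
Writing `sin (x + y i) = sin x cosh y + i cos x sinh y`, a point of the strip has real sine only
when `y = 0`, and then the sine lies in `(-1, 1)`; on the boundary lines `x = ±π/2` the sine is
`±cosh y`, which sweeps out exactly the two rays. Injectivity follows from the description of the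
fibres of `sin` (`z ↦ z + 2kπ`, `z ↦ π - z`), and surjectivity from surjectivity of `sin` on `ℂ`:
these symmetries move any preimage into the closed strip, and the boundary is excluded.
-/

open Complex Set
open scoped Real

namespace Complex

theorem sin_re (z : ℂ) : (sin z).re = Real.sin z.re * Real.cosh z.im := by
  simp [sin_eq z, ← ofReal_sin, ← ofReal_cos, ← ofReal_cosh, ← ofReal_sinh]

theorem sin_im (z : ℂ) : (sin z).im = Real.cos z.re * Real.sinh z.im := by
  simp [sin_eq z, ← ofReal_sin, ← ofReal_cos, ← ofReal_cosh, ← ofReal_sinh]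

end Complex

theorem mem_ofReal_Iic_neg_one_union_Ici_one_iff {w : ℂ} :
    w ∈ ofReal '' Iic (-1) ∪ ofReal '' Ici 1 ↔ w.im = 0 ∧ 1 ≤ |w.re| := by
  constructor
  · rintro (⟨x, hx, rfl⟩ | ⟨x, hx, rfl⟩)
    · exact ⟨ofReal_im x, le_abs'.mpr (.inl hx)⟩
    · exact ⟨ofReal_im x, le_abs'.mpr (.inr hx)⟩
  · rintro ⟨him, hre⟩
    have hw : w = w.re := ext rfl (by simp [him])
    rcases le_abs'.mp hre with h | h
    · exact .inl ⟨w.re, h, hw.symm⟩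
    · exact .inr ⟨w.re, h, hw.symm⟩

theorem abs_sin_re_lt_one_of_sin_im_eq_zero {z : ℂ} (hz : z.re ∈ Ioo (-(π / 2)) (π / 2))
    (him : (sin z).im = 0) : |(sin z).re| < 1 := by
  have hcos : 0 < Real.cos z.re := Real.cos_pos_of_mem_Ioo hz
  have hy : z.im = 0 := by
    simpa [sin_im, hcos.ne', Real.sinh_eq_zero] using him
  rw [sin_re, hy, Real.cosh_zero, mul_one]
  refine abs_lt_of_sq_lt_sq ?_ zero_le_one
  nlinarith [Real.sin_sq_add_cos_sq z.re]

theorem sin_mem_ofReal_Iic_neg_one_union_Ici_one {z : ℂ} (hz : |z.re| = π / 2) :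
    sin z ∈ ofReal '' Iic (-1) ∪ ofReal '' Ici 1 := by
  rw [mem_ofReal_Iic_neg_one_union_Ici_one_iff, sin_re, sin_im]
  rcases abs_eq (by positivity) |>.mp hz with h | h <;>
    simp [h, abs_of_pos (Real.cosh_pos _), Real.one_le_cosh]

theorem exists_sin_eq_sin_re_mem_Icc (z : ℂ) :
    ∃ z' : ℂ, sin z' = sin z ∧ z'.re ∈ Icc (-(π / 2)) (π / 2) := by
  set n := toIcoDiv Real.two_pi_pos (-(π / 2)) z.re
  set z₀ := z - n * (2 * π)
  have hz₀ : z₀.re ∈ Ico (-(π / 2)) (-(π / 2) + 2 * π) := by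
    have hre : z₀.re = z.re - n * (2 * π) := by simp [z₀]
    rw [hre, ← zsmul_eq_mul, self_sub_toIcoDiv_zsmul]
    exact toIcoMod_mem_Ico _ _ _
  by_cases hle : z₀.re ≤ π / 2
  · exact ⟨z₀, sin_sub_int_mul_two_pi z n, hz₀.1, hle⟩
  · refine ⟨π - z₀, by rw [sin_pi_sub, sin_sub_int_mul_two_pi], ?_, ?_⟩ <;>
      simp only [sub_re, ofReal_re] <;> linarith [hz₀.2]

theorem sin_injOn_re_mem_Ioo : InjOn sin {z : ℂ | z.re ∈ Ioo (-(π / 2)) (π / 2)} := by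
  intro z₁ ⟨h₁, h₁'⟩ z₂ ⟨h₂, h₂'⟩ hsin
  obtain ⟨k, hk | hk⟩ := sin_eq_sin_iff.mp hsin
  · have hre : z₂.re = 2 * k * π + z₁.re := by simpa using congrArg re hk
    obtain ⟨hlo, hhi⟩ : (-1 : ℝ) < k ∧ (k : ℝ) < 1 := by
      constructor <;> nlinarith [Real.pi_pos]
    have hk0 : k = 0 := by
      have : (-1 : ℤ) < k := by exact_mod_cast hlo
      have : k < 1 := by exact_mod_cast hhi
      omega
    simpa [hk0] using hk.symm
  · have hre : z₂.re = (2 * k + 1) * π - z₁.re := by simpa using congrArg re hk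
    obtain ⟨hlo, hhi⟩ : (-1 : ℝ) < 2 * k + 1 ∧ (2 * k + 1 : ℝ) < 1 := by
      constructor <;> nlinarith [Real.pi_pos]
    have : (-1 : ℤ) < 2 * k + 1 := by exact_mod_cast hlo
    have : 2 * k + 1 < 1 := by exact_mod_cast hhi
    omega

/-- The complex sine function maps the open vertical strip `{-π/2 < Re z < π/2}`
bijectively onto the complement in `ℂ` of the two closed real rays `(-∞,-1]` and `[1,∞)`. -/
theorem sin_bijOn_strip :
    Set.BijOn Complex.sin
      { z : ℂ | -(Real.pi / 2) < z.re ∧ z.re < Real.pi / 2 }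
      (Set.univ \ ((fun x : ℝ => (x : ℂ)) '' Set.Iic (-1) ∪
        (fun x : ℝ => (x : ℂ)) '' Set.Ici 1)) := by
  refine ⟨fun z hz => ⟨trivial, ?_⟩, sin_injOn_re_mem_Ioo, fun w hw => ?_⟩
  · rw [mem_ofReal_Iic_neg_one_union_Ici_one_iff]
    rintro ⟨him, hre⟩
    exact (abs_sin_re_lt_one_of_sin_im_eq_zero hz him).not_ge hre
  · obtain ⟨z, rfl⟩ := sin_surjective w
    obtain ⟨z', hsin, hre⟩ := exists_sin_eq_sin_re_mem_Icc z
    have hlt : |z'.re| < π / 2 := (abs_le.mpr hre).lt_of_ne fun h =>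
      hw.2 (hsin ▸ sin_mem_ofReal_Iic_neg_one_union_Ici_one h)
    exact ⟨z', abs_lt.mp hlt, hsin⟩
end
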